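/- arXiv:2511.19833 — 7 statements merged into one kernel-verified Lean document; each statement's English description precedes it below -/
import Mathlib

section
/- For any maximal element u of a finite preordered set (V, ≤), u is rare in the family I(V,≤) of order ideals: the number of order ideals containing u is at most half the total number of order ideals. -/
open Finset

open scoped Classical in
/-- The family of order ideals of a (pre)order `le` on the ground set `V`. -/
noncomputable def idealFamily {α : Type*} [DecidableEq α] (V : Finset α)
    (le : α → α → Prop) : Finset (Finset α) :=
  V.powerset.filter (fun I => ∀ x ∈ I, ∀ y ∈ V, le y x → y ∈ I)

open scoped Classical in
theorem maximal_element_is_rare {α : Type*} [DecidableEq α]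
    (V : Finset α) (le : α → α → Prop)
    (hrefl : ∀ x ∈ V, le x x)
    (htrans : ∀ x y z, le x y → le y z → le x z)
    (u : α) (hu : u ∈ V)
    (hmax : ∀ v ∈ V, le u v → le v u) :
    2 * ((idealFamily V le).filter (fun I => u ∈ I)).card
      ≤ (idealFamily V le).card := by
  classical
  set C : Finset α := V.filter (fun v => le u v) with hC
  have huC : u ∈ C := by simp [hC, hu, hrefl u hu]
  -- C is contained in any ideal containing u
  have hCsub : ∀ I ∈ (idealFamily V le).filter (fun I => u ∈ I), C ⊆ I := by
    intro I hI v hv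
    simp only [idealFamily, mem_filter, mem_powerset] at hI
    rcases hI with ⟨⟨hIV, hId⟩, huI⟩
    simp only [hC, mem_filter] at hv
    exact hId u huI v hv.1 (hmax v hv.1 hv.2)
  -- the map I ↦ I \ C lands in ideals not containing u
  have hmap : ∀ I ∈ (idealFamily V le).filter (fun I => u ∈ I),
      I \ C ∈ (idealFamily V le).filter (fun I => u ∉ I) := by
    intro I hI
    simp only [idealFamily, mem_filter, mem_powerset] at hI ⊢
    rcases hI with ⟨⟨hIV, hId⟩, huI⟩
    refine ⟨⟨(sdiff_subset).trans hIV, ?_⟩, by simp [huC]⟩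
    intro x hx y hy hyx
    simp only [mem_sdiff] at hx ⊢
    refine ⟨hId x hx.1 y hy hyx, fun hyC => hx.2 ?_⟩
    simp only [hC, mem_filter] at hyC ⊢
    exact ⟨hIV hx.1, htrans u y x hyC.2 hyx⟩
  have hinj : ∀ I ∈ (idealFamily V le).filter (fun I => u ∈ I),
      ∀ J ∈ (idealFamily V le).filter (fun I => u ∈ I),
      I \ C = J \ C → I = J := by
    intro I hI J hJ h
    have h1 : I = (I \ C) ∪ C := by
      rw [sdiff_union_self_eq_union, Finset.union_eq_left.2 (hCsub I hI)]
    have h2 : J = (J \ C) ∪ C := by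
      rw [sdiff_union_self_eq_union, Finset.union_eq_left.2 (hCsub J hJ)]
    rw [h1, h2, h]
  have hle := Finset.card_le_card_of_injOn _ hmap hinj
  have hsplit := Finset.card_filter_add_card_filter_not
    (s := idealFamily V le) (p := fun I => u ∈ I)
  omega
end

section
/- Let f : V → V induce a functional preorder ≤ on the finite set V, and suppose u ∈ V lies in an equivalence class of size at least 2. Define V' = V \ {u} and g : V' → V' by g(x) = f(x) if f(x) ≠ u and g(x) = f(f(x)) if f(x) = u. Then the family of order ideals of the functional preorder induced by g on V' equals trace_u(I(V,≤)) = {I \ {u} : I ∈ I(V,≤)}. -/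
open Finset

theorem trace_of_ideals_is_functional {α : Type*} [Fintype α] [DecidableEq α]
    (f : α → α) (u : α)
    (h : ∃ w : α, w ≠ u ∧ (∃ k : ℕ, f^[k] u = w) ∧ (∃ k : ℕ, f^[k] w = u)) :
    idealFamily (Finset.univ.erase u)
        (fun a b => ∃ k : ℕ, (fun x => if f x = u then f (f x) else f x)^[k] a = b) =
      (idealFamily Finset.univ (fun a b => ∃ k : ℕ, f^[k] a = b)).image
        (fun I => I.erase u) := by
  classical
  obtain ⟨w, hwu, ⟨k0, hk0⟩, -⟩ := h
  have hfu : f u ≠ u := by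
    intro hf
    exact hwu ((hk0 ▸ Function.iterate_fixed hf k0 : w = u))
  set g : α → α := fun x => if f x = u then f (f x) else f x with hg
  -- Lemma A : g-iterates are f-iterates
  have lemA : ∀ (k : ℕ) (a : α), ∃ m, g^[k] a = f^[m] a := by
    intro k
    induction k with
    | zero => intro a; exact ⟨0, rfl⟩
    | succ n ih =>
      intro a
      obtain ⟨m, hm⟩ := ih (g a)
      rw [Function.iterate_succ_apply, hm]
      by_cases hfa : f a = u
      · refine ⟨m + 2, ?_⟩
        rw [Function.iterate_add_apply]
        congr 1
        simp [hg, hfa, Function.iterate_succ_apply]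
      · refine ⟨m + 1, ?_⟩
        rw [Function.iterate_add_apply]
        congr 1
        simp [hg, hfa]
  -- Lemma B : f-paths avoiding u at endpoints lift to g-paths
  have lemB : ∀ (k : ℕ) (v : α), v ≠ u → f^[k] v ≠ u → ∃ m, g^[m] v = f^[k] v := by
    intro k
    induction k using Nat.strong_induction_on with
    | _ k ih =>
      intro v hv hkv
      match k, hkv with
      | 0, hkv => exact ⟨0, rfl⟩
      | (j+1), hkv =>
        by_cases hfv : f v = u
        · match j, hkv with
          | 0, hkv => exact absurd hfv hkv
          | (i+1), hkv =>
            have h2 : f^[i+1+1] v = f^[i] (f u) := by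
              rw [show i+1+1 = i+2 from rfl, Function.iterate_add_apply]
              congr 1
              simp [Function.iterate_succ_apply, hfv]
            obtain ⟨m, hm⟩ := ih i (by omega) (f u) hfu (by rw [← h2]; exact hkv)
            refine ⟨m + 1, ?_⟩
            rw [Function.iterate_succ_apply, h2, ← hm]
            congr 1
            simp [hg, hfv]
        · have h2 : f^[j+1] v = f^[j] (f v) := Function.iterate_succ_apply f j v
          obtain ⟨m, hm⟩ := ih j (by omega) (f v) hfv (by rw [← h2]; exact hkv)
          refine ⟨m + 1, ?_⟩
          rw [Function.iterate_succ_apply, h2, ← hm]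
          congr 1
          simp [hg, hfv]
  ext J
  simp only [idealFamily, Finset.mem_filter, Finset.mem_powerset, Finset.mem_image]
  constructor
  · rintro ⟨hJsub, hJideal⟩
    refine ⟨Finset.univ.filter (fun v => ∃ x ∈ J, ∃ k : ℕ, f^[k] v = x), ⟨?_, ?_⟩, ?_⟩
    · exact Finset.subset_univ _
    · intro x hx y _ ⟨j, hj⟩
      simp only [Finset.mem_filter, Finset.mem_univ, true_and] at hx ⊢
      obtain ⟨z, hz, k, hk⟩ := hx
      exact ⟨z, hz, k + j, by rw [Function.iterate_add_apply, hj, hk]⟩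
    · ext v
      simp only [Finset.mem_erase, Finset.mem_filter, Finset.mem_univ, true_and]
      constructor
      · rintro ⟨hvu, z, hz, k, hk⟩
        have hzu : z ≠ u := (Finset.mem_erase.mp (hJsub hz)).1
        obtain ⟨m, hm⟩ := lemB k v hvu (hk ▸ hzu)
        exact hJideal z hz v (Finset.mem_erase.mpr ⟨hvu, Finset.mem_univ v⟩) ⟨m, hm.trans hk⟩
      · intro hv
        exact ⟨(Finset.mem_erase.mp (hJsub hv)).1, v, hv, 0, rfl⟩
  · rintro ⟨I, ⟨-, hIideal⟩, rfl⟩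
    constructor
    · intro v hv
      exact Finset.mem_erase.mpr ⟨(Finset.mem_erase.mp hv).1, Finset.mem_univ v⟩
    · rintro x hx y hy ⟨k, hk⟩
      obtain ⟨m, hm⟩ := lemA k y
      refine Finset.mem_erase.mpr ⟨(Finset.mem_erase.mp hy).1, ?_⟩
      exact hIideal x (Finset.mem_erase.mp hx).2 y (Finset.mem_univ y) ⟨m, hm.symm.trans hk⟩
end

section
/- Let f : V → V induce a functional preorder ≤ on a finite set V, and let u lie in an equivalence class of size at least 2. Let (V', ≤') be the restriction of the preorder to V' = V \ {u} (which is the functional preorder induced by the modified function g). Then NDS(I(V,≤)) ≤ NDS(I(V',≤')). -/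
open Finset

/-- Normalized degree sum of a family `F` over ground set `V`. -/
def NDS {α : Type*} (V : Finset α) (F : Finset (Finset α)) : ℤ :=
  2 * (∑ A ∈ F, (A.card : ℤ)) - (F.card : ℤ) * (V.card : ℤ)

theorem nds_trace_monotone {α : Type*} [Fintype α] [DecidableEq α]
    (f : α → α) (u : α)
    (h : ∃ w : α, w ≠ u ∧ (∃ k : ℕ, f^[k] u = w) ∧ (∃ k : ℕ, f^[k] w = u)) :
    NDS Finset.univ (idealFamily Finset.univ (fun a b => ∃ k : ℕ, f^[k] a = b)) ≤
      NDS (Finset.univ.erase u)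
        (idealFamily (Finset.univ.erase u) (fun a b => ∃ k : ℕ, f^[k] a = b)) := by
  classical
  obtain ⟨w, hwu, ⟨k₁, hk₁⟩, ⟨k₂, hk₂⟩⟩ := h
  set le : α → α → Prop := fun a b => ∃ k : ℕ, f^[k] a = b with hle
  have lrefl : ∀ a, le a a := fun a => ⟨0, rfl⟩
  have ltrans : ∀ a b c, le a b → le b c → le a c := by
    rintro a b c ⟨k, rfl⟩ ⟨m, rfl⟩
    exact ⟨m + k, Function.iterate_add_apply f m k a⟩
  have luw : le u w := ⟨k₁, hk₁⟩
  have lwu : le w u := ⟨k₂, hk₂⟩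
  -- w lies on a cycle of positive length
  have hp : f^[k₁ + k₂] w = w := by
    rw [Function.iterate_add_apply, hk₂, hk₁]
  have hppos : 0 < k₁ + k₂ := by
    rcases Nat.eq_zero_or_pos (k₁ + k₂) with h0 | h0
    · exfalso
      have : k₂ = 0 := by omega
      exact hwu (by simpa [this] using hk₂)
    · exact h0
  set p := k₁ + k₂ with hpdef
  have cyc : ∀ x, le w x → le x w := by
    rintro x ⟨j, rfl⟩
    refine ⟨p * (j + 1) - j, ?_⟩
    have hj : j ≤ p * (j + 1) := by nlinarith
    rw [← Function.iterate_add_apply, Nat.sub_add_cancel hj, Function.iterate_mul]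
    exact Function.iterate_fixed hp (j + 1)
  have hmem : ∀ (V I : Finset α),
      I ∈ idealFamily V le ↔ I ⊆ V ∧ ∀ x ∈ I, ∀ y ∈ V, le y x → y ∈ I := by
    intro V I
    simp [idealFamily]
  set V' : Finset α := Finset.univ.erase u with hV'
  set F : Finset (Finset α) := idealFamily Finset.univ le with hF
  set F' : Finset (Finset α) := idealFamily V' le with hF'
  -- erasing u from an ideal of V gives an ideal of V'
  have hA : ∀ I ∈ F, I.erase u ∈ F' := by
    intro I hI
    rw [hmem] at hI ⊢
    refine ⟨erase_subset_erase _ (subset_univ I), ?_⟩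
    intro x hx y hy hyx
    rw [mem_erase] at hx hy ⊢
    exact ⟨hy.1, hI.2 x hx.2 y (mem_univ y) hyx⟩
  -- in an ideal of V, u ∈ I ↔ w ∈ I
  have hB : ∀ I ∈ F, (u ∈ I ↔ w ∈ I) := by
    intro I hI
    rw [hmem] at hI
    constructor
    · intro hu; exact hI.2 u hu w (mem_univ w) lwu
    · intro hw; exact hI.2 w hw u (mem_univ u) luw
  -- the inverse map
  set ι : Finset α → Finset α := fun J => if w ∈ J then insert u J else J with hι
  have hunotJ : ∀ J ∈ F', u ∉ J := by
    intro J hJ hu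
    have := ((hmem _ _).1 hJ).1 hu
    simp [hV'] at this
  have hC : ∀ J ∈ F', ι J ∈ F := by
    intro J hJ
    have hJ' := (hmem _ _).1 hJ
    rw [hmem]
    by_cases hw : w ∈ J
    · simp only [hι, if_pos hw]
      refine ⟨subset_univ _, ?_⟩
      intro x hx y _ hyx
      rcases mem_insert.1 hx with hxu | hx
      · by_cases hyu : y = u
        · simp [hyu]
        · have hyV' : y ∈ V' := by simp [hV', hyu]
          have hyu' : le y u := hxu ▸ hyx
          exact mem_insert_of_mem (hJ'.2 w hw y hyV' (ltrans y u w hyu' luw))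
      · by_cases hyu : y = u
        · simp [hyu]
        · have hyV' : y ∈ V' := by simp [hV', hyu]
          exact mem_insert_of_mem (hJ'.2 x hx y hyV' hyx)
    · simp only [hι, if_neg hw]
      refine ⟨subset_univ _, ?_⟩
      intro x hx y _ hyx
      by_cases hyu : y = u
      · exfalso
        subst hyu
        exact hw (hJ'.2 x hx w (by simp [hV', hwu]) (ltrans w y x lwu hyx))
      · exact hJ'.2 x hx y (by simp [hV', hyu]) hyx
  have hleft : ∀ I ∈ F, ι (I.erase u) = I := by
    intro I hI
    by_cases hu : u ∈ I
    · have hw : w ∈ I := (hB I hI).1 hu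
      have hwE : w ∈ I.erase u := mem_erase.2 ⟨hwu, hw⟩
      simp only [hι]
      rw [if_pos hwE, insert_erase hu]
    · have hw : w ∉ I := fun hw => hu ((hB I hI).2 hw)
      have hw' : w ∉ I.erase u := fun h' => hw (mem_of_mem_erase h')
      simp only [hι]
      rw [if_neg hw', erase_eq_of_notMem hu]
  have hright : ∀ J ∈ F', (ι J).erase u = J := by
    intro J hJ
    by_cases hw : w ∈ J
    · simp [hι, hw, erase_insert (hunotJ J hJ)]
    · simp [hι, hw, erase_eq_of_notMem (hunotJ J hJ)]
  have hcard : F.card = F'.card :=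
    card_nbij' (fun I => I.erase u) ι hA hC hleft hright
  have hsum : ∑ I ∈ F, ((I.card : ℤ)) =
      ∑ J ∈ F', ((J.card : ℤ) + if w ∈ J then 1 else 0) := by
    refine Finset.sum_nbij' (fun I => I.erase u) ι hA hC hleft hright ?_
    intro I hI
    by_cases hu : u ∈ I
    · have hw : w ∈ I := (hB I hI).1 hu
      have hwE : w ∈ I.erase u := mem_erase.2 ⟨hwu, hw⟩
      have : (I.erase u).card = I.card - 1 := card_erase_of_mem hu
      have hIpos : 1 ≤ I.card := card_pos.2 ⟨u, hu⟩
      simp only [hwE, if_pos, this]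
      push_cast [Nat.cast_sub hIpos]
      ring
    · have hw : w ∉ I := fun hw => hu ((hB I hI).2 hw)
      have hw' : w ∉ I.erase u := fun h' => hw (mem_of_mem_erase h')
      show ((I.card : ℤ)) = ((I.erase u).card : ℤ) + if w ∈ I.erase u then 1 else 0
      rw [erase_eq_of_notMem hu, if_neg hw, add_zero]
  -- the cycle class of w inside V'
  set C : Finset α := V'.filter (fun x => le w x ∧ le x w) with hCdef
  have hwC : w ∈ C := by
    simp [hCdef, hV', hwu, lrefl w]
  have hCsub : ∀ J ∈ F', w ∈ J → C ⊆ J := by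
    intro J hJ hw x hx
    simp only [hCdef, mem_filter] at hx
    exact ((hmem _ _).1 hJ).2 w hw x hx.1 hx.2.2
  have hψ : ∀ J ∈ F', J \ C ∈ F' := by
    intro J hJ
    have hJ' := (hmem _ _).1 hJ
    rw [hmem]
    refine ⟨(sdiff_subset).trans hJ'.1, ?_⟩
    intro x hx y hy hyx
    rw [mem_sdiff] at hx ⊢
    refine ⟨hJ'.2 x hx.1 y hy hyx, ?_⟩
    intro hyC
    simp only [hCdef, mem_filter] at hyC
    have hwx : le w x := ltrans w y x hyC.2.1 hyx
    have hxV' : x ∈ V' := hJ'.1 hx.1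
    exact hx.2 (by simp only [hCdef, mem_filter]; exact ⟨hxV', hwx, cyc x hwx⟩)
  -- counting: ideals of V' containing w are at most those not containing w
  set a := (F'.filter (fun J => w ∈ J)).card with ha
  set b := (F'.filter (fun J => w ∉ J)).card with hb
  have hab : a + b = F'.card := card_filter_add_card_filter_not _
  have haleb : a ≤ b := by
    apply card_le_card_of_injOn (fun J => J \ C)
    · intro J hJ
      rw [mem_coe, mem_filter] at hJ ⊢
      exact ⟨hψ J hJ.1, fun hcon => (mem_sdiff.1 hcon).2 hwC⟩
    · intro J1 hJ1 J2 hJ2 heq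
      have heq' : J1 \ C = J2 \ C := heq
      simp only [coe_filter, Set.mem_setOf_eq] at hJ1 hJ2
      have e1 : J1 \ C ∪ C = J1 := sdiff_union_of_subset (hCsub J1 hJ1.1 hJ1.2)
      have e2 : J2 \ C ∪ C = J2 := sdiff_union_of_subset (hCsub J2 hJ2.1 hJ2.2)
      rw [← e1, ← e2, heq']
  -- sum of indicator
  have hind : ∑ J ∈ F', (if w ∈ J then (1 : ℤ) else 0) = a := by
    rw [Finset.sum_boole]
  have hsum' : ∑ I ∈ F, ((I.card : ℤ)) = (∑ J ∈ F', (J.card : ℤ)) + a := by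
    rw [hsum, Finset.sum_add_distrib, hind]
  -- cardinalities of ground sets
  have hn : (V'.card : ℤ) = (((Finset.univ : Finset α)).card : ℤ) - 1 := by
    have : V'.card = (Finset.univ : Finset α).card - 1 := card_erase_of_mem (mem_univ u)
    have hpos : 1 ≤ (Finset.univ : Finset α).card := card_pos.2 ⟨u, mem_univ u⟩
    rw [this, Nat.cast_sub hpos, Nat.cast_one]
  -- conclude
  have hcard' : (F.card : ℤ) = (F'.card : ℤ) := by exact_mod_cast hcard
  have hab' : (a : ℤ) + (b : ℤ) = (F'.card : ℤ) := by exact_mod_cast hab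
  have haleb' : (a : ℤ) ≤ (b : ℤ) := by exact_mod_cast haleb
  have expand : ((F'.card : ℤ)) * ((((Finset.univ : Finset α)).card : ℤ) - 1)
      = (F'.card : ℤ) * ((Finset.univ : Finset α).card : ℤ) - (F'.card : ℤ) := by ring
  simp only [NDS]
  rw [hsum', hn, hcard', expand]
  linarith
end

section
/- A finite partial order is functional (induced by some function f : V → V with f(u)=u exactly at maximal elements) if and only if its Hasse diagram is acyclic as an undirected graph and each connected component has a unique maximal element (i.e., it is a rooted forest). -/
/-- The Hasse diagram of a partial order, as an undirected simple graph:
vertices are adjacent iff one covers the other. -/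
def hasseGraph (α : Type*) [PartialOrder α] : SimpleGraph α where
  Adj a b := a ⋖ b ∨ b ⋖ a
  symm := ⟨by intro a b h; tauto⟩
  loopless := ⟨by intro a h; rcases h with h | h <;> exact absurd h.lt (lt_irrefl a)⟩

lemma exists_le_isMax' {α : Type*} [Finite α] [PartialOrder α] (a : α) :
    ∃ m : α, a ≤ m ∧ IsMax m := by
  have : WellFoundedGT α := Finite.to_wellFoundedGT
  refine IsWellFounded.induction (motive := fun x => ∃ m, x ≤ m ∧ IsMax m) (· > ·) a ?_
  intro x ih
  by_cases h : IsMax x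
  · exact ⟨x, le_rfl, h⟩
  · obtain ⟨b, hb⟩ := not_isMax_iff.mp h
    obtain ⟨m, hm, hmax⟩ := ih b hb
    exact ⟨m, hb.le.trans hm, hmax⟩

lemma rtg_covBy_of_le' {α : Type*} [Fintype α] [PartialOrder α] {b : α} :
    ∀ a : α, a ≤ b → Relation.ReflTransGen (· ⋖ ·) a b := by
  classical
  have : WellFoundedGT α := Finite.to_wellFoundedGT
  intro a
  refine IsWellFounded.induction (motive := fun x => x ≤ b → Relation.ReflTransGen (· ⋖ ·) x b) (· > ·) a ?_
  intro x ih hxb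
  rcases eq_or_lt_of_le hxb with rfl | hlt
  · exact .refl
  · obtain ⟨c, hc, hmin⟩ : ∃ c ∈ Finset.univ.filter (fun c => x < c ∧ c ≤ b),
        ∀ d ∈ Finset.univ.filter (fun c => x < c ∧ c ≤ b), ¬ d < c :=
      (Finset.exists_minimal (s := Finset.univ.filter (fun c => x < c ∧ c ≤ b))
        ⟨b, by simp [hlt]⟩).imp fun u hu => ⟨hu.1, fun d hd hlt' => hlt'.not_ge (hu.2 hd hlt'.le)⟩
    simp only [Finset.mem_filter, Finset.mem_univ, true_and] at hc hmin
    have hcov : x ⋖ c := ⟨hc.1, fun d hxd hdc => hmin d ⟨hxd, hdc.le.trans hc.2⟩ hdc⟩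
    exact Relation.ReflTransGen.head hcov (ih c hc.1 hc.2)

theorem functional_iff_rooted_forest {α : Type*} [Fintype α] [PartialOrder α] :
    (∃ f : α → α,
        (∀ a b : α, a ≤ b ↔ Relation.ReflTransGen (fun v w => f v = w ∧ f v ≠ v) a b) ∧
        (∀ a : α, f a = a ↔ IsMax a)) ↔
      ((hasseGraph α).IsAcyclic ∧
        ∀ a : α, ∃! m : α, (hasseGraph α).Reachable a m ∧ IsMax m) := by
  classical
  constructor
  · rintro ⟨f, h₁, h₂⟩
    set S : α → α → Prop := fun v w => f v = w ∧ f v ≠ v with hS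
    have hle_f : ∀ a : α, a ≤ f a := by
      intro a
      by_cases h : f a = a
      · exact h.ge
      · exact (h₁ a (f a)).2 (Relation.ReflTransGen.single ⟨rfl, h⟩)
    have hcov : ∀ a b : α, a ⋖ b ↔ (f a = b ∧ a ≠ b) := by
      intro a b
      constructor
      · intro h
        have hab : a ≠ b := h.lt.ne
        have hr : Relation.ReflTransGen S a b := (h₁ a b).1 h.le
        rcases hr.cases_head with rfl | ⟨c, hs, hcb⟩
        · exact absurd rfl hab
        · obtain ⟨hfc, hne⟩ := hs
          have hcb' : c ≤ b := (h₁ c b).2 hcb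
          by_cases hcb2 : c = b
          · exact ⟨hfc.trans hcb2, hab⟩
          · exfalso
            have hac : a < c := lt_of_le_of_ne (hfc ▸ hle_f a) (fun h' => hne (hfc.trans h'.symm))
            exact h.2 hac (lt_of_le_of_ne hcb' hcb2)
      · rintro ⟨hfab, hne⟩
        have hlt : a < b := lt_of_le_of_ne (hfab ▸ hle_f a) hne
        refine ⟨hlt, ?_⟩
        intro d had hdb
        have hr : Relation.ReflTransGen S a d := (h₁ a d).1 had.le
        rcases hr.cases_head with rfl | ⟨c, hs, hcd⟩
        · exact lt_irrefl a had
        · have hbd : b ≤ d := by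
            rw [← hfab, hs.1]; exact (h₁ c d).2 hcd
          exact lt_irrefl b (lt_of_le_of_lt hbd hdb)
    have hadjstep : ∀ a : α, f a ≠ a → (hasseGraph α).Adj a (f a) :=
      fun a h => Or.inl ((hcov a (f a)).2 ⟨rfl, fun e => h e.symm⟩)
    have hwfgt : WellFoundedGT α := Finite.to_wellFoundedGT
    have hreachmax : ∀ a : α, ∃ m, Relation.ReflTransGen S a m ∧ IsMax m := by
      intro a
      refine IsWellFounded.induction (motive := fun x => ∃ m, Relation.ReflTransGen S x m ∧ IsMax m)
        (· > ·) a ?_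
      intro x ih
      by_cases h : f x = x
      · exact ⟨x, .refl, (h₂ x).1 h⟩
      · obtain ⟨m, hm, hmax⟩ := ih (f x) (lt_of_le_of_ne (hle_f x) (Ne.symm h))
        exact ⟨m, Relation.ReflTransGen.head ⟨rfl, h⟩ hm, hmax⟩
    have hcomp : ∀ a b c : α, Relation.ReflTransGen S a b → Relation.ReflTransGen S a c →
        Relation.ReflTransGen S b c ∨ Relation.ReflTransGen S c b := by
      intro a b c hab
      induction hab using Relation.ReflTransGen.head_induction_on with
      | refl => exact fun h => Or.inl h
      | head step rest ih =>
        intro hxc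
        rcases hxc.cases_head with rfl | ⟨z, hz, hzc⟩
        · exact Or.inr (Relation.ReflTransGen.head step rest)
        · have : z = _ := hz.1.symm.trans step.1
          subst this
          exact ih hzc
    have humax : ∀ a m m' : α, IsMax m → a ≤ m → IsMax m' → a ≤ m' → m = m' := by
      intro a m m' hm ham hm' ham'
      rcases hcomp a m m' ((h₁ _ _).1 ham) ((h₁ _ _).1 ham') with h | h
      · have h' : m ≤ m' := (h₁ _ _).2 h
        exact le_antisymm h' (hm h')
      · have h' : m' ≤ m := (h₁ _ _).2 h
        exact (le_antisymm h' (hm' h')).symm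
    have hreach : ∀ a b : α, Relation.ReflTransGen S a b → (hasseGraph α).Reachable a b := by
      intro a b h
      induction h with
      | refl => exact SimpleGraph.Reachable.refl _
      | tail _ step ih =>
        exact ih.trans (SimpleGraph.Adj.reachable (step.1 ▸ hadjstep _ step.2))
    have hadjle : ∀ a b : α, (hasseGraph α).Adj a b →
        ∀ m m' : α, IsMax m → a ≤ m → IsMax m' → b ≤ m' → m = m' := by
      intro a b hab m m' hm ham hm' hbm'
      rcases hab with h | h
      · exact humax a m m' hm ham hm' (h.le.trans hbm')
      · exact humax b m m' hm (h.le.trans ham) hm' hbm'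
    have hsame : ∀ a b : α, (hasseGraph α).Reachable a b →
        ∀ m m' : α, IsMax m → a ≤ m → IsMax m' → b ≤ m' → m = m' := by
      intro a b hr
      rw [SimpleGraph.reachable_iff_reflTransGen] at hr
      induction hr with
      | refl => exact fun m m' hm ham hm' ham' => humax _ m m' hm ham hm' ham'
      | @tail c d hr' hadj ih =>
        intro m m' hm ham hm' hbm'
        obtain ⟨mc, hmc, hmcmax⟩ := hreachmax c
        have hcmc : c ≤ mc := (h₁ _ _).2 hmc
        exact (ih m mc hm ham hmcmax hcmc).trans (hadjle c d hadj mc m' hmcmax hcmc hm' hbm')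
    constructor
    · -- acyclicity
      intro v p hp
      have hsupne : p.support.toFinset.Nonempty :=
        ⟨v, List.mem_toFinset.2 p.start_mem_support⟩
      obtain ⟨u, hu, hmin⟩ : ∃ u ∈ p.support.toFinset, ∀ x ∈ p.support.toFinset, ¬ x < u :=
        (Finset.exists_minimal hsupne).imp fun u hu => ⟨hu.1, fun d hd hlt' => hlt'.not_ge (hu.2 hd hlt'.le)⟩
      rw [List.mem_toFinset] at hu
      have hc := hp.rotate hu
      set c := p.rotate u hu with hcdef
      have hcsup : ∀ x, x ∈ c.support → x ∈ p.support := by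
        intro x hx
        rw [SimpleGraph.Walk.support_eq_cons c, List.mem_cons] at hx
        rcases hx with rfl | hx
        · exact hu
        · have := (SimpleGraph.Walk.support_rotate p u hu).mem_iff.1 hx
          rw [SimpleGraph.Walk.support_eq_cons p]
          exact List.mem_cons_of_mem _ this
      have hmin' : ∀ x ∈ c.support, ¬ x < u :=
        fun x hx => hmin x (List.mem_toFinset.2 (hcsup x hx))
      have hlen := hc.three_le_length
      have hnil : ¬ c.Nil := hc.not_nil
      obtain ⟨x, hux, q, hq⟩ := SimpleGraph.Walk.not_nil_iff.1 hnil
      have hnil2 : ¬ c.reverse.Nil := by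
        rw [SimpleGraph.Walk.nil_iff_length_eq, SimpleGraph.Walk.length_reverse]
        omega
      obtain ⟨y, huy, r, hr⟩ := SimpleGraph.Walk.not_nil_iff.1 hnil2
      have hxmem : x ∈ c.support := by
        rw [hq]
        exact List.mem_cons_of_mem _ q.start_mem_support
      have hymem : y ∈ c.support := by
        have : y ∈ c.reverse.support := by
          rw [hr]; exact List.mem_cons_of_mem _ r.start_mem_support
        rwa [SimpleGraph.Walk.support_reverse, List.mem_reverse] at this
      have hfux : f u = x := by
        rcases hux with h | h
        · exact ((hcov u x).1 h).1
        · exact absurd h.lt (hmin' x hxmem)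
      have hfuy : f u = y := by
        rcases huy with h | h
        · exact ((hcov u y).1 h).1
        · exact absurd h.lt (hmin' y hymem)
      have hxy : x = y := hfux.symm.trans hfuy
      subst hxy
      -- first edge equals last edge, contradicting edges_nodup
      have he1 : c.edges = s(u, x) :: q.edges := by rw [hq]; simp
      have he2 : c.edges.reverse = s(u, x) :: r.edges := by
        rw [← SimpleGraph.Walk.edges_reverse, hr]; simp
      have hqne : q.edges ≠ [] := by
        intro h
        have h1 : q.length = 0 := by
          have := q.length_edges
          rw [h] at this; simpa using this.symm
        have h2 : c.length = q.length + 1 := by rw [hq]; simp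
        omega
      have he3 : q.edges.reverse ++ [s(u, x)] = s(u, x) :: r.edges := by
        rw [← List.reverse_cons, ← he1, he2]
      have hmem2 : s(u, x) ∈ q.edges := by
        rcases hqr : q.edges.reverse with _ | ⟨b, t⟩
        · exact absurd (List.reverse_eq_nil_iff.1 hqr) hqne
        · rw [hqr, List.cons_append] at he3
          have hb : b = s(u, x) := (List.cons.inj he3).1
          rw [← List.mem_reverse, hqr, hb]
          exact List.mem_cons_self
      have hnd := hc.edges_nodup
      rw [he1] at hnd
      exact (List.nodup_cons.1 hnd).1 hmem2
    · -- unique max per component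
      intro a
      obtain ⟨m, hm, hmax⟩ := hreachmax a
      have ham : a ≤ m := (h₁ _ _).2 hm
      refine ⟨m, ⟨hreach a m hm, hmax⟩, ?_⟩
      rintro m' ⟨hr', hmax'⟩
      exact (hsame a m' hr' m m' hmax ham hmax' le_rfl).symm
  · rintro ⟨hac, hconn⟩
    have hpath : ∀ a m : α, Relation.ReflTransGen (· ⋖ ·) a m →
        ∃ pw : (hasseGraph α).Walk a m, pw.IsPath ∧ ∀ z ∈ pw.support, a ≤ z := by
      intro a m h
      induction h using Relation.ReflTransGen.head_induction_on with
      | refl =>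
        refine ⟨.nil, SimpleGraph.Walk.IsPath.nil, ?_⟩
        intro z hz
        simp only [SimpleGraph.Walk.support_nil, List.mem_singleton] at hz
        exact hz.ge
      | head h' hrest ih =>
        obtain ⟨pw, hpw, hlb⟩ := ih
        refine ⟨.cons (Or.inl h') pw, hpw.cons ?_, ?_⟩
        · intro hmem
          exact absurd (h'.lt.trans_le (hlb _ hmem)) (lt_irrefl _)
        · intro z hz
          change z ∈ _ :: pw.support at hz
          simp only [List.mem_cons] at hz
          rcases hz with rfl | hz
          · exact le_rfl
          · exact h'.le.trans (hlb z hz)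
    have hcovuniq : ∀ a b c : α, a ⋖ b → a ⋖ c → b = c := by
      intro a b c hb hcc
      obtain ⟨mb, hbm, hmbmax⟩ := exists_le_isMax' b
      obtain ⟨mc, hcm, hmcmax⟩ := exists_le_isMax' c
      obtain ⟨pb, hpb, hlbb⟩ := hpath b mb (rtg_covBy_of_le' b hbm)
      obtain ⟨pc, hpc, hlbc⟩ := hpath c mc (rtg_covBy_of_le' c hcm)
      have hrb : (hasseGraph α).Reachable a mb :=
        (SimpleGraph.Adj.reachable (Or.inl hb)).trans ⟨pb⟩
      have hrc : (hasseGraph α).Reachable a mc :=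
        (SimpleGraph.Adj.reachable (Or.inl hcc)).trans ⟨pc⟩
      obtain ⟨m, _, huniq⟩ := hconn a
      have h1 : mb = m := huniq mb ⟨hrb, hmbmax⟩
      have h2 : mc = m := huniq mc ⟨hrc, hmcmax⟩
      subst h1
      subst h2
      have hPb : (SimpleGraph.Walk.cons (Or.inl hb) pb).IsPath :=
        hpb.cons (fun hmem => absurd (hb.lt.trans_le (hlbb _ hmem)) (lt_irrefl _))
      have hPc : (SimpleGraph.Walk.cons (Or.inl hcc) pc).IsPath :=
        hpc.cons (fun hmem => absurd (hcc.lt.trans_le (hlbc _ hmem)) (lt_irrefl _))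
      have hPQ := SimpleGraph.isAcyclic_iff_path_unique.1 hac ⟨_, hPb⟩ ⟨_, hPc⟩
      have hw : SimpleGraph.Walk.cons (Or.inl hb) pb =
          SimpleGraph.Walk.cons (Or.inl hcc) pc := congrArg Subtype.val hPQ
      have hsup := congrArg SimpleGraph.Walk.support hw
      change a :: pb.support = a :: pc.support at hsup
      rw [SimpleGraph.Walk.support_eq_cons pb, SimpleGraph.Walk.support_eq_cons pc] at hsup
      exact (List.cons.inj (List.cons.inj hsup).2).1
    have hcovex : ∀ a : α, ¬IsMax a → ∃ b, a ⋖ b := by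
      intro a ha
      obtain ⟨m, ham, hm⟩ := exists_le_isMax' a
      have hne : a ≠ m := fun h => ha (h ▸ hm)
      rcases (rtg_covBy_of_le' a ham).cases_head with rfl | ⟨c, hcov, _⟩
      · exact absurd rfl hne
      · exact ⟨c, hcov⟩
    classical
    set f : α → α := fun a => if h : IsMax a then a else Classical.choose (hcovex a h) with hf
    have hfcov : ∀ a, ∀ h : ¬IsMax a, a ⋖ f a := by
      intro a h
      simp only [hf, dif_neg h]
      exact Classical.choose_spec (hcovex a h)
    have hfmax : ∀ a : α, f a = a ↔ IsMax a := by
      intro a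
      constructor
      · intro h
        by_contra hm
        exact (hfcov a hm).lt.ne' (by rw [h])
      · intro h
        simp only [hf, dif_pos h]
    refine ⟨f, ?_, hfmax⟩
    intro a b
    constructor
    · intro hab
      have h := rtg_covBy_of_le' a hab
      clear hab
      induction h with
      | refl => exact .refl
      | @tail c d hrt hcd ih =>
        have hcm : ¬IsMax c := fun h => absurd (h hcd.lt.le) hcd.lt.not_ge
        have hfc : f c = d := hcovuniq c (f c) d (hfcov c hcm) hcd
        exact ih.tail ⟨hfc, fun h => hcm ((hfmax c).1 h)⟩
    · intro h
      induction h with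
      | refl => exact le_rfl
      | @tail c d hrt hstep ih =>
        have hcm : ¬IsMax c := fun h => hstep.2 ((hfmax c).2 h)
        exact ih.trans (hstep.1 ▸ (hfcov c hcm).le)
end

section
/- Let (V, ≤) be a finite connected rooted-forest poset with unique maximal element x, and (V', ≤') the restriction to V' = V \ {x}. Then NDS(I(V,≤)) = NDS(I(V',≤')) + (|V| − |I(V,≤)| + 1). -/
open Finset

theorem nds_delete_unique_max {α : Type*} [Fintype α] [DecidableEq α] [PartialOrder α]
    (f : α → α)
    (hfun : ∀ a b : α, a ≤ b ↔ Relation.ReflTransGen (fun v w => f v = w ∧ f v ≠ v) a b)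
    (x : α) (hx : ∀ y : α, y ≤ x) :
    NDS Finset.univ (idealFamily Finset.univ (fun a b : α => a ≤ b)) =
      NDS (Finset.univ.erase x) (idealFamily (Finset.univ.erase x) (fun a b : α => a ≤ b)) +
        ((Fintype.card α : ℤ) -
          ((idealFamily Finset.univ (fun a b : α => a ≤ b)).card : ℤ) + 1) := by
  classical
  have hkey : idealFamily (univ : Finset α) (fun a b : α => a ≤ b) =
      insert univ (idealFamily ((univ : Finset α).erase x) (fun a b : α => a ≤ b)) := by
    ext A
    simp only [idealFamily, mem_filter, mem_powerset, mem_insert]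
    constructor
    · rintro ⟨-, hcl⟩
      by_cases hxA : x ∈ A
      · left; ext y; simp only [Finset.mem_univ, iff_true]
        exact hcl x hxA y (mem_univ y) (hx y)
      · right
        refine ⟨fun a ha => mem_erase.mpr ⟨fun h => hxA (h ▸ ha), mem_univ a⟩, ?_⟩
        intro a ha y _ hle
        exact hcl a ha y (mem_univ y) hle
    · rintro (rfl | ⟨hsub, hcl⟩)
      · exact ⟨subset_rfl, fun a _ y _ _ => mem_univ y⟩
      · refine ⟨subset_univ A, fun a ha y _ hle => ?_⟩
        by_cases hyx : y = x
        · have hax : a = x := le_antisymm (hx a) (hyx ▸ hle)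
          exact absurd (hsub ha) (by simp [hax])
        · exact hcl a ha y (mem_erase.mpr ⟨hyx, mem_univ y⟩) hle
  have hnot : (univ : Finset α) ∉ idealFamily ((univ : Finset α).erase x) (fun a b : α => a ≤ b) := by
    simp only [idealFamily, mem_filter, mem_powerset]
    rintro ⟨hsub, -⟩
    exact (mem_erase.mp (hsub (mem_univ x))).1 rfl
  have hpos : 1 ≤ Fintype.card α := @Fintype.card_pos α _ ⟨x⟩
  have hcarde : ((univ : Finset α).erase x).card = Fintype.card α - 1 := by
    simp [card_erase_of_mem, card_univ]
  rw [hkey]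
  unfold NDS
  rw [Finset.sum_insert hnot, Finset.card_insert_of_notMem hnot, hcarde, card_univ]
  have h1 : ((Fintype.card α - 1 : ℕ) : ℤ) = (Fintype.card α : ℤ) - 1 := by
    omega
  push_cast [h1]
  ring
end

section
/- Secondary Main Theorem: For every finite functional partial order (V, ≤) (equivalently, every rooted-forest poset), the family of order ideals satisfies NDS(I(V,≤)) ≤ 0; that is, I(V,≤) is average-rare. -/
open Finset

set_option linter.unusedSectionVars false

namespace SecondaryAux

variable {α : Type*} [DecidableEq α] {f : α → α}

def fle (f : α → α) (a b : α) : Prop := ∃ k : ℕ, f^[k] a = b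

lemma fle_refl (f : α → α) (a : α) : fle f a a := ⟨0, rfl⟩

lemma fle_trans {a b c : α} (h1 : fle f a b) (h2 : fle f b c) : fle f a c := by
  obtain ⟨k, rfl⟩ := h1
  obtain ⟨l, rfl⟩ := h2
  exact ⟨l + k, (Function.iterate_add_apply f l k a)⟩

lemma fle_total_above {v a b : α} (ha : fle f v a) (hb : fle f v b) :
    fle f a b ∨ fle f b a := by
  obtain ⟨i, rfl⟩ := ha
  obtain ⟨j, rfl⟩ := hb
  rcases le_total i j with h | h
  · exact Or.inl ⟨j - i, by rw [← Function.iterate_add_apply, Nat.sub_add_cancel h]⟩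
  · exact Or.inr ⟨i - j, by rw [← Function.iterate_add_apply, Nat.sub_add_cancel h]⟩

lemma mem_idealFamily {V I : Finset α} {le : α → α → Prop} :
    I ∈ idealFamily V le ↔ I ⊆ V ∧ ∀ x ∈ I, ∀ y ∈ V, le y x → y ∈ I := by
  classical
  simp [idealFamily, Finset.mem_filter, Finset.mem_powerset]

/-- down-segments of a chain are determined by their cardinality -/
lemma seg_subset {C' A B : Finset α}
    (hA : A ⊆ C') (hB : B ⊆ C')
    (hAd : ∀ x ∈ A, ∀ b ∈ C', fle f b x → b ∈ A)
    (hBd : ∀ x ∈ B, ∀ b ∈ C', fle f b x → b ∈ B)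
    (htot : ∀ a ∈ C', ∀ b ∈ C', fle f a b ∨ fle f b a)
    (hcard : A.card ≤ B.card) : A ⊆ B := by
  intro a ha
  by_contra haB
  have hBA : B ⊆ A.erase a := by
    intro b hb
    rcases htot a (hA ha) b (hB hb) with h | h
    · exact absurd (hBd b hb a (hA ha) h) haB
    · refine Finset.mem_erase.2 ⟨?_, hAd a ha b (hB hb) h⟩
      rintro rfl; exact haB hb
  have := Finset.card_le_card hBA
  rw [Finset.card_erase_of_mem ha] at this
  have h1 : 1 ≤ A.card := Finset.card_pos.2 ⟨a, ha⟩
  omega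

lemma seg_eq {C' A B : Finset α}
    (hA : A ⊆ C') (hB : B ⊆ C')
    (hAd : ∀ x ∈ A, ∀ b ∈ C', fle f b x → b ∈ A)
    (hBd : ∀ x ∈ B, ∀ b ∈ C', fle f b x → b ∈ B)
    (htot : ∀ a ∈ C', ∀ b ∈ C', fle f a b ∨ fle f b a)
    (hcard : A.card = B.card) : A = B :=
  (Finset.eq_of_subset_of_card_le (seg_subset hA hB hAd hBd htot hcard.le) hcard.ge)


lemma main (hanti : ∀ a b : α, fle f a b → fle f b a → a = b) :
    ∀ V : Finset α, NDS V (idealFamily V (fle f)) ≤ 0 := by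
  classical
  intro V
  induction V using Finset.strongInduction with
  | _ V ih =>
  rcases V.eq_empty_or_nonempty with rfl | hne
  · have hF : ∀ A ∈ idealFamily (∅ : Finset α) (fle f), A = ∅ := by
      intro A hA
      simpa using (mem_idealFamily.1 hA).1
    have hsum : ∑ A ∈ idealFamily (∅ : Finset α) (fle f), ((A.card : ℤ)) = 0 := by
      refine Finset.sum_eq_zero fun A hA => by simp [hF A hA]
    simp [NDS, hsum]
  -- pick a minimal element v
  obtain ⟨v, hvV, hvmin⟩ : ∃ v ∈ V, ∀ y ∈ V, fle f y v → y = v := by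
    obtain ⟨v, hvV, hmin⟩ := V.exists_min_image
      (fun x => (V.filter (fun z => fle f z x)).card) hne
    refine ⟨v, hvV, fun y hy hyv => ?_⟩
    by_contra hne'
    have hsub : V.filter (fun z => fle f z y) ⊂ V.filter (fun z => fle f z v) := by
      refine ⟨fun z hz => ?_, fun hcon => ?_⟩
      · rw [Finset.mem_filter] at hz ⊢
        exact ⟨hz.1, fle_trans hz.2 hyv⟩
      · have hvmem : v ∈ V.filter (fun z => fle f z y) :=
          hcon (Finset.mem_filter.2 ⟨hvV, fle_refl f v⟩)
        have := (Finset.mem_filter.1 hvmem).2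
        exact hne' (hanti y v hyv this)
    have := Finset.card_lt_card hsub
    have := hmin y hy
    omega
  set F := idealFamily V (fle f) with hFdef
  set V' := V.erase v with hV'def
  set C := V.filter (fun x => fle f v x) with hCdef
  set C' := C.erase v with hC'def
  set F1 := idealFamily V' (fle f) with hF1def
  set F2 := idealFamily (V \ C) (fle f) with hF2def
  have hCV : C ⊆ V := Finset.filter_subset _ _
  have hvC : v ∈ C := Finset.mem_filter.2 ⟨hvV, fle_refl f v⟩
  have hC'V' : C' ⊆ V' := Finset.erase_subset_erase v hCV
  have hV'V : V' ⊆ V := Finset.erase_subset v V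
  -- Step A: ideals containing v correspond to F1
  have claim1 : ∀ I ∈ F.filter (fun I => v ∈ I), I.erase v ∈ F1 := by
    intro I hI
    rw [Finset.mem_filter] at hI
    obtain ⟨hIF, hvI⟩ := hI
    rw [mem_idealFamily] at hIF ⊢
    refine ⟨Finset.erase_subset_erase v hIF.1, ?_⟩
    intro x hx y hy hyx
    rw [Finset.mem_erase] at hx hy ⊢
    exact ⟨hy.1, hIF.2 x hx.2 y hy.2 hyx⟩
  have claim2 : ∀ J ∈ F1, insert v J ∈ F.filter (fun I => v ∈ I) := by
    intro J hJ
    rw [mem_idealFamily] at hJ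
    rw [Finset.mem_filter]
    refine ⟨mem_idealFamily.2 ⟨?_, ?_⟩, Finset.mem_insert_self v J⟩
    · intro x hx
      rcases Finset.mem_insert.1 hx with rfl | hx
      · exact hvV
      · exact hV'V (hJ.1 hx)
    · intro x hx y hy hyx
      rcases Finset.mem_insert.1 hx with rfl | hx
      · exact Finset.mem_insert.2 (Or.inl (hvmin y hy hyx))
      · by_cases hyv : y = v
        · exact Finset.mem_insert.2 (Or.inl hyv)
        · exact Finset.mem_insert.2 (Or.inr
            (hJ.2 x hx y (Finset.mem_erase.2 ⟨hyv, hy⟩) hyx))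
  have hnotmem : ∀ J ∈ F1, v ∉ J := by
    intro J hJ hvJ
    have := (mem_idealFamily.1 hJ).1 hvJ
    exact (Finset.mem_erase.1 this).1 rfl
  have hsum1 : ∑ I ∈ F.filter (fun I => v ∈ I), (I.card : ℤ)
      = ∑ J ∈ F1, ((J.card : ℤ) + 1) := by
    refine Finset.sum_nbij' (fun I => I.erase v) (fun J => insert v J)
      claim1 claim2 ?_ ?_ ?_
    · intro I hI
      exact Finset.insert_erase (Finset.mem_filter.1 hI).2
    · intro J hJ
      exact Finset.erase_insert (hnotmem J hJ)
    · intro I hI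
      have hvI := (Finset.mem_filter.1 hI).2
      rw [Finset.card_erase_of_mem hvI]
      have : 1 ≤ I.card := Finset.card_pos.2 ⟨v, hvI⟩
      push_cast [Nat.cast_sub this]
      ring
  have hcard1 : (F.filter (fun I => v ∈ I)).card = F1.card := by
    refine Finset.card_nbij' (fun I => I.erase v) (fun J => insert v J)
      claim1 claim2 ?_ ?_
    · intro I hI
      exact Finset.insert_erase (Finset.mem_filter.1 hI).2
    · intro J hJ
      exact Finset.erase_insert (hnotmem J hJ)
  -- Step B: ideals not containing v are exactly F2
  have stepB : F.filter (fun I => v ∉ I) = F2 := by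
    ext I
    rw [Finset.mem_filter, mem_idealFamily, mem_idealFamily]
    constructor
    · rintro ⟨⟨hIV, hid⟩, hvI⟩
      have hIC : ∀ x ∈ I, x ∉ C := by
        intro x hx hxC
        exact hvI (hid x hx v hvV (Finset.mem_filter.1 hxC).2)
      refine ⟨fun x hx => Finset.mem_sdiff.2 ⟨hIV hx, hIC x hx⟩, ?_⟩
      intro x hx y hy hyx
      exact hid x hx y (Finset.mem_sdiff.1 hy).1 hyx
    · rintro ⟨hIVC, hid⟩
      have hIV : I ⊆ V := fun x hx => (Finset.mem_sdiff.1 (hIVC hx)).1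
      refine ⟨⟨hIV, ?_⟩, fun hvI => (Finset.mem_sdiff.1 (hIVC hvI)).2 hvC⟩
      intro x hx y hy hyx
      by_cases hyC : y ∈ C
      · exfalso
        have hvy : fle f v y := (Finset.mem_filter.1 hyC).2
        have hvx : fle f v x := fle_trans hvy hyx
        have hxC : x ∈ C := Finset.mem_filter.2 ⟨hIV hx, hvx⟩
        exact (Finset.mem_sdiff.1 (hIVC hx)).2 hxC
      · exact hid x hx y (Finset.mem_sdiff.2 ⟨hy, hyC⟩) hyx
  -- Step C: F1.card ≤ F2.card * C.card
  have hchain : ∀ a ∈ C', ∀ b ∈ C', fle f a b ∨ fle f b a := by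
    intro a ha b hb
    exact fle_total_above (Finset.mem_filter.1 (Finset.mem_of_mem_erase ha)).2
      (Finset.mem_filter.1 (Finset.mem_of_mem_erase hb)).2
  have hCpos : 1 ≤ C.card := Finset.card_pos.2 ⟨v, hvC⟩
  have hsdiffmem : ∀ J ∈ F1, J \ C' ∈ F2 := by
    intro J hJ
    rw [mem_idealFamily] at hJ ⊢
    constructor
    · intro x hx
      rw [Finset.mem_sdiff] at hx
      have hxV' : x ∈ V' := hJ.1 hx.1
      rw [Finset.mem_sdiff]
      refine ⟨hV'V hxV', fun hxC => hx.2 (Finset.mem_erase.2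
        ⟨(Finset.mem_erase.1 hxV').1, hxC⟩)⟩
    · intro x hx y hy hyx
      rw [Finset.mem_sdiff] at hx hy ⊢
      have hyV' : y ∈ V' := Finset.mem_erase.2
        ⟨fun h => hy.2 (h ▸ hvC), hy.1⟩
      refine ⟨hJ.2 x hx.1 y hyV' hyx, fun hyC' => hy.2 (Finset.mem_of_mem_erase hyC')⟩
  have hdown : ∀ J ∈ F1, ∀ x ∈ J ∩ C', ∀ b ∈ C', fle f b x → b ∈ J ∩ C' := by
    intro J hJ x hx b hb hbx
    rw [Finset.mem_inter] at hx ⊢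
    exact ⟨(mem_idealFamily.1 hJ).2 x hx.1 b (hC'V' hb) hbx, hb⟩
  have hinj : F1.card ≤ F2.card * C.card := by
    have key := Finset.card_le_card_of_injOn
      (f := fun J => (J \ C', (J ∩ C').card))
      (s := F1) (t := F2 ×ˢ Finset.range C.card) ?_ ?_
    · rwa [Finset.card_product, Finset.card_range] at key
    · intro J hJ
      show (J \ C', (J ∩ C').card) ∈ F2 ×ˢ Finset.range C.card
      simp only [Finset.mem_product, Finset.mem_range]
      refine ⟨hsdiffmem J hJ, ?_⟩
      have h1 : (J ∩ C').card ≤ C'.card := Finset.card_le_card Finset.inter_subset_right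
      have h2 : C'.card = C.card - 1 := Finset.card_erase_of_mem hvC
      omega
    · intro J hJ K hK heq
      simp only [Prod.mk.injEq] at heq
      have hseg : J ∩ C' = K ∩ C' := by
        refine seg_eq Finset.inter_subset_right Finset.inter_subset_right
          (hdown J hJ) (hdown K hK) hchain heq.2
      have : J \ C' ∪ J ∩ C' = K \ C' ∪ K ∩ C' := by rw [heq.1, hseg]
      rwa [Finset.sdiff_union_inter, Finset.sdiff_union_inter] at this
  -- Step D: arithmetic
  have hssV' : V' ⊂ V := Finset.erase_ssubset hvV
  have hssVC : V \ C ⊂ V := by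
    refine Finset.ssubset_iff_of_subset (Finset.sdiff_subset) |>.2 ⟨v, hvV, ?_⟩
    simp [hvC]
  have IH1 := ih V' hssV'
  have IH2 := ih (V \ C) hssVC
  rw [← hF1def] at IH1
  rw [← hF2def] at IH2
  have hsplitsum : ∑ A ∈ F, (A.card : ℤ)
      = ∑ I ∈ F.filter (fun I => v ∈ I), (I.card : ℤ)
      + ∑ I ∈ F.filter (fun I => v ∉ I), (I.card : ℤ) :=
    (Finset.sum_filter_add_sum_filter_not F _ _).symm
  have hsplitcard : (F.filter (fun I => v ∈ I)).card
      + (F.filter (fun I => v ∉ I)).card = F.card :=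
    Finset.card_filter_add_card_filter_not _
  have hcardV' : (V'.card : ℤ) = (V.card : ℤ) - 1 := by
    rw [hV'def, Finset.card_erase_of_mem hvV]
    have : 1 ≤ V.card := Finset.card_pos.2 ⟨v, hvV⟩
    push_cast [Nat.cast_sub this]
    ring
  have hcardVC : ((V \ C).card : ℤ) = (V.card : ℤ) - (C.card : ℤ) := by
    rw [Finset.card_sdiff_of_subset hCV]
    have : C.card ≤ V.card := Finset.card_le_card hCV
    push_cast [Nat.cast_sub this]
    ring
  rw [NDS] at IH1 IH2 ⊢
  rw [hsplitsum, hsum1, ← hsplitcard, hcard1, stepB]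
  rw [hcardV'] at IH1
  rw [hcardVC] at IH2
  have hinjZ : (F1.card : ℤ) ≤ (F2.card : ℤ) * (C.card : ℤ) := by exact_mod_cast hinj
  have hCposZ : (1 : ℤ) ≤ (C.card : ℤ) := by exact_mod_cast hCpos
  rw [Finset.sum_add_distrib, Finset.sum_const, nsmul_eq_mul, mul_one]
  push_cast
  nlinarith [IH1, IH2, hinjZ]

end SecondaryAux

theorem secondary_main_theorem {α : Type*} [Fintype α] [DecidableEq α]
    (f : α → α)
    (hanti : ∀ a b : α, (∃ k : ℕ, f^[k] a = b) → (∃ k : ℕ, f^[k] b = a) → a = b) :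
    NDS Finset.univ
      (idealFamily Finset.univ (fun a b : α => ∃ k : ℕ, f^[k] a = b)) ≤ 0 := by
  exact SecondaryAux.main (f := f) hanti Finset.univ
end

section
/- Main Theorem: For any finite set V and any function f : V → V, the family of order ideals of the functional preorder induced by f satisfies NDS(I(V,≤)) ≤ 0; equivalently, this family is average-rare, so in particular it contains a rare element when V is nonempty. -/
open Finset

set_option linter.unusedSectionVars false

namespace AvgRareProof

open Function

variable {α : Type*} [DecidableEq α]

/-- The functional preorder induced by `f`. -/
def fle (f : α → α) : α → α → Prop := fun a b => ∃ k : ℕ, f^[k] a = b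

lemma fle_trans {f : α → α} {a b c : α} : fle f a b → fle f b c → fle f a c :=
  fun ⟨k, hk⟩ ⟨l, hl⟩ => ⟨l + k, by rw [Function.iterate_add_apply, hk, hl]⟩

lemma mem_idealFamily {V : Finset α} {r : α → α → Prop} {J : Finset α} :
    J ∈ idealFamily V r ↔ J ⊆ V ∧ ∀ x ∈ J, ∀ y ∈ V, r y x → y ∈ J := by
  classical
  simp [idealFamily, Finset.mem_filter, Finset.mem_powerset]

lemma empty_mem_idealFamily {V : Finset α} {r : α → α → Prop} :
    (∅ : Finset α) ∈ idealFamily V r := by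
  rw [mem_idealFamily]
  exact ⟨Finset.empty_subset _, by simp⟩

lemma idealFamily_empty {r : α → α → Prop} :
    idealFamily (∅ : Finset α) r = {∅} := by
  ext J
  rw [mem_idealFamily]
  simp [Finset.subset_empty]

lemma iter_mem {f : α → α} {V : Finset α} (hV : ∀ x ∈ V, f x ∈ V) :
    ∀ (k : ℕ) {x : α}, x ∈ V → f^[k] x ∈ V := by
  intro k
  induction k with
  | zero => intro x hx; simpa using hx
  | succ n ih =>
    intro x hx
    rw [Function.iterate_succ_apply']
    exact hV _ (ih hx)

/-- Counting: if `g` has no nontrivial periodic points in `B`, there are at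
least `|B| + 1` ideals. -/
lemma card_idealFamily_ge (g : α → α) (B : Finset α)
    (hanti : ∀ x ∈ B, ∀ k : ℕ, g^[k + 1] x = x → g x = x) :
    B.card + 1 ≤ (idealFamily B (fle g)).card := by
  classical
  set P : α → Finset α := fun x => B.filter (fun y => fle g y x) with hP
  have hself : ∀ x ∈ B, x ∈ P x := fun x hx => Finset.mem_filter.2 ⟨hx, ⟨0, rfl⟩⟩
  have hPmem : ∀ x ∈ B, P x ∈ idealFamily B (fle g) := by
    intro x hx
    rw [mem_idealFamily]
    refine ⟨Finset.filter_subset _ _, ?_⟩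
    intro z hz y hy hyz
    rw [Finset.mem_filter] at hz ⊢
    exact ⟨hy, fle_trans hyz hz.2⟩
  have hinj : Set.InjOn P B := by
    intro x hx y hy hxy
    have hxPy : x ∈ P y := hxy ▸ hself x hx
    have hyPx : y ∈ P x := hxy.symm ▸ hself y hy
    obtain ⟨k, hk⟩ := (Finset.mem_filter.1 hxPy).2
    obtain ⟨l, hl⟩ := (Finset.mem_filter.1 hyPx).2
    rcases Nat.eq_zero_or_pos k with h0 | hpos
    · subst h0; exact hk
    · have hret : g^[l + k] x = x := by rw [Function.iterate_add_apply, hk, hl]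
      have hfix : g x = x := by
        have : l + k - 1 + 1 = l + k := by omega
        exact hanti x hx (l + k - 1) (by rw [this]; exact hret)
      have : g^[k] x = x := Function.iterate_fixed hfix k
      rw [this] at hk; exact hk
  have hne : ∀ x ∈ B, P x ≠ ∅ := by
    intro x hx h
    exact absurd (hself x hx) (by rw [h]; simp)
  have hsub : insert ∅ (B.image P) ⊆ idealFamily B (fle g) := by
    intro J hJ
    rcases Finset.mem_insert.1 hJ with h | h
    · subst h; exact empty_mem_idealFamily
    · obtain ⟨x, hx, rfl⟩ := Finset.mem_image.1 h
      exact hPmem x hx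
  have hcard : (insert ∅ (B.image P)).card = B.card + 1 := by
    rw [Finset.card_insert_of_notMem, Finset.card_image_of_injOn hinj]
    intro h
    obtain ⟨x, hx, hPx⟩ := Finset.mem_image.1 h
    exact hne x hx hPx
  calc B.card + 1 = (insert ∅ (B.image P)).card := hcard.symm
    _ ≤ (idealFamily B (fle g)).card := Finset.card_le_card hsub

lemma idealFamily_split (f : α → α) (V V₁ V₂ : Finset α)
    (h1 : ∀ x ∈ V₁, f x ∈ V₁) (h2 : ∀ x ∈ V₂, f x ∈ V₂)
    (hdisj : Disjoint V₁ V₂) (hunion : V₁ ∪ V₂ = V) :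
    idealFamily V (fle f) =
      ((idealFamily V₁ (fle f)) ×ˢ (idealFamily V₂ (fle f))).image
        (fun p => p.1 ∪ p.2) := by
  classical
  ext J
  constructor
  · intro hJ
    rw [mem_idealFamily] at hJ
    refine Finset.mem_image.2 ⟨(J ∩ V₁, J ∩ V₂), Finset.mem_product.2 ⟨?_, ?_⟩, ?_⟩
    · rw [mem_idealFamily]
      refine ⟨Finset.inter_subset_right, ?_⟩
      intro x hx y hy hle
      rw [Finset.mem_inter] at hx ⊢
      exact ⟨hJ.2 x hx.1 y (by rw [← hunion]; exact Finset.mem_union_left _ hy) hle, hy⟩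
    · rw [mem_idealFamily]
      refine ⟨Finset.inter_subset_right, ?_⟩
      intro x hx y hy hle
      rw [Finset.mem_inter] at hx ⊢
      exact ⟨hJ.2 x hx.1 y (by rw [← hunion]; exact Finset.mem_union_right _ hy) hle, hy⟩
    · show J ∩ V₁ ∪ J ∩ V₂ = J
      rw [← Finset.inter_union_distrib_left, hunion]
      exact Finset.inter_eq_left.2 hJ.1
  · intro hJ
    obtain ⟨⟨J₁, J₂⟩, hp, rfl⟩ := Finset.mem_image.1 hJ
    obtain ⟨hp1, hp2⟩ := Finset.mem_product.1 hp
    rw [mem_idealFamily] at hp1 hp2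
    obtain ⟨hs1, hi1⟩ := hp1
    obtain ⟨hs2, hi2⟩ := hp2
    rw [mem_idealFamily]
    constructor
    · rw [← hunion]; exact Finset.union_subset_union hs1 hs2
    · intro x hx y hy hle
      obtain ⟨k, hk⟩ := hle
      have hy' : y ∈ V₁ ∪ V₂ := by rw [hunion]; exact hy
      rcases Finset.mem_union.1 hx with hx1 | hx2
      · rcases Finset.mem_union.1 hy' with hy1 | hy2
        · exact Finset.mem_union_left _ (hi1 x hx1 y hy1 ⟨k, hk⟩)
        · exfalso
          have : f^[k] y ∈ V₂ := iter_mem h2 k hy2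
          rw [hk] at this
          exact Finset.disjoint_left.1 hdisj (hs1 hx1) this
      · rcases Finset.mem_union.1 hy' with hy1 | hy2
        · exfalso
          have : f^[k] y ∈ V₁ := iter_mem h1 k hy1
          rw [hk] at this
          exact Finset.disjoint_left.1 hdisj this (hs2 hx2)
        · exact Finset.mem_union_right _ (hi2 x hx2 y hy2 ⟨k, hk⟩)

lemma nds_product (f : α → α) (V V₁ V₂ : Finset α)
    (h1 : ∀ x ∈ V₁, f x ∈ V₁) (h2 : ∀ x ∈ V₂, f x ∈ V₂)
    (hdisj : Disjoint V₁ V₂) (hunion : V₁ ∪ V₂ = V) :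
    NDS V (idealFamily V (fle f)) =
      ((idealFamily V₂ (fle f)).card : ℤ) * NDS V₁ (idealFamily V₁ (fle f)) +
      ((idealFamily V₁ (fle f)).card : ℤ) * NDS V₂ (idealFamily V₂ (fle f)) := by
  classical
  set F₁ := idealFamily V₁ (fle f) with hF₁
  set F₂ := idealFamily V₂ (fle f) with hF₂
  have hsub1 : ∀ J ∈ F₁, J ⊆ V₁ := fun J hJ => (mem_idealFamily.1 hJ).1
  have hsub2 : ∀ J ∈ F₂, J ⊆ V₂ := fun J hJ => (mem_idealFamily.1 hJ).1
  have hrec : ∀ p ∈ F₁ ×ˢ F₂, ∀ q ∈ F₁ ×ˢ F₂,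
      (fun p : Finset α × Finset α => p.1 ∪ p.2) p =
      (fun p : Finset α × Finset α => p.1 ∪ p.2) q → p = q := by
    intro p hp q hq hpq
    rw [Finset.mem_product] at hp hq
    simp only at hpq
    have key : ∀ (A B C D : Finset α), A ⊆ V₁ → B ⊆ V₂ → C ⊆ V₁ → D ⊆ V₂ →
        A ∪ B = C ∪ D → A = C := by
      intro A B C D hA hB hC hD h
      have e1 : (A ∪ B) ∩ V₁ = A := by
        rw [Finset.union_inter_distrib_right, Finset.inter_eq_left.2 hA,
          Finset.disjoint_iff_inter_eq_empty.1
            (Finset.disjoint_of_subset_left hB hdisj.symm), Finset.union_empty]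
      have e2 : (C ∪ D) ∩ V₁ = C := by
        rw [Finset.union_inter_distrib_right, Finset.inter_eq_left.2 hC,
          Finset.disjoint_iff_inter_eq_empty.1
            (Finset.disjoint_of_subset_left hD hdisj.symm), Finset.union_empty]
      rw [← e1, ← e2, h]
    have e1 : p.1 = q.1 := key _ _ _ _ (hsub1 _ hp.1) (hsub2 _ hp.2) (hsub1 _ hq.1)
      (hsub2 _ hq.2) hpq
    have e2 : p.2 = q.2 := by
      have d1 : Disjoint p.1 p.2 :=
        Finset.disjoint_of_subset_left (hsub1 _ hp.1)
          (Finset.disjoint_of_subset_right (hsub2 _ hp.2) hdisj)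
      have d2 : Disjoint q.1 q.2 :=
        Finset.disjoint_of_subset_left (hsub1 _ hq.1)
          (Finset.disjoint_of_subset_right (hsub2 _ hq.2) hdisj)
      have : (p.1 ∪ p.2) \ p.1 = p.2 := Finset.union_sdiff_cancel_left d1
      rw [← this, hpq, e1, Finset.union_sdiff_cancel_left d2]
    exact Prod.ext e1 e2
  have hfam := idealFamily_split f V V₁ V₂ h1 h2 hdisj hunion
  have hcard : (idealFamily V (fle f)).card = F₁.card * F₂.card := by
    rw [hfam, Finset.card_image_of_injOn hrec, Finset.card_product]
  have hsum : ∑ A ∈ idealFamily V (fle f), (A.card : ℤ) =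
      (F₂.card : ℤ) * (∑ A ∈ F₁, (A.card : ℤ)) +
      (F₁.card : ℤ) * (∑ A ∈ F₂, (A.card : ℤ)) := by
    rw [hfam, Finset.sum_image hrec]
    have : ∀ p ∈ F₁ ×ˢ F₂, ((p.1 ∪ p.2).card : ℤ) = (p.1.card : ℤ) + p.2.card := by
      intro p hp
      rw [Finset.mem_product] at hp
      rw [Finset.card_union_of_disjoint]
      · push_cast; ring
      · exact Finset.disjoint_of_subset_left (hsub1 _ hp.1)
          (Finset.disjoint_of_subset_right (hsub2 _ hp.2) hdisj)
    rw [Finset.sum_congr rfl this, Finset.sum_product]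
    simp only [Finset.sum_add_distrib, Finset.sum_const, nsmul_eq_mul,
      Finset.sum_mul, Finset.mul_sum]
  have hV : (V.card : ℤ) = (V₁.card : ℤ) + V₂.card := by
    rw [← hunion, Finset.card_union_of_disjoint hdisj]; push_cast; ring
  unfold NDS
  rw [hcard, hsum, hV]
  push_cast
  ring

/-- The connected case: every two points of `V` have meeting forward orbits. -/
lemma connected_case (f : α → α) (V : Finset α) (hV : ∀ x ∈ V, f x ∈ V)
    (hconn : ∀ x ∈ V, ∀ y ∈ V, ∃ k l : ℕ, f^[k] y = f^[l] x)
    (hne : V.Nonempty)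
    (hIH : ∀ (B : Finset α) (g : α → α), B.card < V.card →
      (∀ x ∈ B, g x ∈ B) → NDS B (idealFamily B (fle g)) ≤ 0) :
    NDS V (idealFamily V (fle f)) ≤ 0 := by
  classical
  set K := V.filter (fun x => ∃ p : ℕ, f^[p + 1] x = x) with hK
  set B := V \ K with hB
  set g : α → α := fun x => if f x ∈ B then f x else x with hg
  have hKV : K ⊆ V := Finset.filter_subset _ _
  have hBV : B ⊆ V := Finset.sdiff_subset
  -- K is nonempty
  have hKne : K.Nonempty := by
    obtain ⟨x, hx⟩ := hne
    obtain ⟨i, j, hne', hij⟩ :=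
      Finite.exists_ne_map_eq_of_infinite
        (fun i : ℕ => (⟨f^[i] x, iter_mem hV i hx⟩ : {y // y ∈ V}))
    have hij' : f^[i] x = f^[j] x := congrArg Subtype.val hij
    rcases Nat.lt_or_ge i j with h | h
    · refine ⟨f^[i] x, Finset.mem_filter.2 ⟨iter_mem hV i hx, ⟨j - i - 1, ?_⟩⟩⟩
      have : j - i - 1 + 1 = j - i := by omega
      rw [this, ← Function.iterate_add_apply]
      have : j - i + i = j := by omega
      rw [this, ← hij']
    · have h' : j < i := by omega
      refine ⟨f^[j] x, Finset.mem_filter.2 ⟨iter_mem hV j hx, ⟨i - j - 1, ?_⟩⟩⟩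
      have : i - j - 1 + 1 = i - j := by omega
      rw [this, ← Function.iterate_add_apply]
      have : i - j + j = i := by omega
      rw [this, hij']
  -- basic invariances
  have hgB : ∀ x ∈ B, g x ∈ B := by
    intro x hx
    by_cases h : f x ∈ B
    · simp [hg, h]
    · simpa [hg, h] using hx
  have hKf : ∀ x ∈ K, f x ∈ K := by
    intro x hx
    rw [Finset.mem_filter] at hx ⊢
    obtain ⟨hxV, p, hp⟩ := hx
    refine ⟨hV x hxV, p, ?_⟩
    calc f^[p + 1] (f x) = f (f^[p + 1] x) := by
          rw [← Function.iterate_succ_apply, Function.iterate_succ_apply']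
      _ = f x := by rw [hp]
  have hKiter : ∀ (k : ℕ) {x : α}, x ∈ K → f^[k] x ∈ K := iter_mem hKf
  -- g-paths are f-paths
  have claim1 : ∀ (k : ℕ) (y x : α), g^[k] y = x → ∃ j : ℕ, f^[j] y = x := by
    intro k
    induction k with
    | zero => intro y x h; exact ⟨0, h⟩
    | succ m ih =>
      intro y x h
      rw [Function.iterate_succ_apply] at h
      by_cases hy : f y ∈ B
      · have hgy : g y = f y := if_pos hy
        rw [hgy] at h
        obtain ⟨j, hj⟩ := ih (f y) x h
        exact ⟨j + 1, by rw [Function.iterate_add_apply]; simpa using hj⟩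
      · have hgy : g y = y := if_neg hy
        rw [hgy] at h
        exact ih y x h
  -- f-paths staying in B are g-paths
  have path : ∀ (k : ℕ) (y : α), y ∈ B → f^[k] y ∈ B → g^[k] y = f^[k] y := by
    intro k
    induction k with
    | zero => intro y _ _; rfl
    | succ m ih =>
      intro y hy hfy
      have hfyB : f y ∈ B := by
        rw [hB, Finset.mem_sdiff]
        refine ⟨hV y (hBV hy), ?_⟩
        intro hfK
        have : f^[m] (f y) ∈ K := hKiter m hfK
        rw [← Function.iterate_succ_apply] at this
        rw [hB, Finset.mem_sdiff] at hfy
        exact hfy.2 this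
      have hgy : g y = f y := if_pos hfyB
      rw [Function.iterate_succ_apply, hgy, Function.iterate_succ_apply]
      exact ih (f y) hfyB (by rw [← Function.iterate_succ_apply]; exact hfy)
  -- ideals meeting K are everything
  have absorb : ∀ J, J ∈ idealFamily V (fle f) → ∀ c ∈ K, c ∈ J → J = V := by
    intro J hJ c hcK hcJ
    rw [mem_idealFamily] at hJ
    refine Finset.Subset.antisymm hJ.1 ?_
    intro y hy
    rw [Finset.mem_filter] at hcK
    obtain ⟨hcV, p, hp⟩ := hcK
    obtain ⟨k, l, hkl⟩ := hconn c hcV y hy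
    have hc : f^[(p + 1) * l] c = c := by
      rw [Function.iterate_mul]
      exact Function.iterate_fixed hp l
    have hyc : f^[l * p + k] y = c := by
      rw [Function.iterate_add_apply, hkl, ← Function.iterate_add_apply]
      have : l * p + l = (p + 1) * l := by ring
      rw [this, hc]
    exact hJ.2 c hcJ y hy ⟨l * p + k, hyc⟩
  -- decomposition of the family
  have famEq : idealFamily V (fle f) = insert V (idealFamily B (fle g)) := by
    ext J
    constructor
    · intro hJ
      by_cases hJK : ∃ c ∈ K, c ∈ J
      · obtain ⟨c, hcK, hcJ⟩ := hJK
        rw [absorb J hJ c hcK hcJ]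
        exact Finset.mem_insert_self _ _
      · push_neg at hJK
        rw [mem_idealFamily] at hJ
        refine Finset.mem_insert.2 (Or.inr ?_)
        rw [mem_idealFamily]
        constructor
        · intro y hy
          rw [hB, Finset.mem_sdiff]
          exact ⟨hJ.1 hy, fun hK => hJK y hK hy⟩
        · intro x hx y hy hle
          obtain ⟨k, hk⟩ := hle
          obtain ⟨j, hj⟩ := claim1 k y x hk
          exact hJ.2 x hx y (hBV hy) ⟨j, hj⟩
    · intro hJ
      rcases Finset.mem_insert.1 hJ with rfl | hJ
      · rw [mem_idealFamily]
        exact ⟨Finset.Subset.refl _, fun x _ y hy _ => hy⟩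
      · rw [mem_idealFamily] at hJ ⊢
        refine ⟨hJ.1.trans hBV, ?_⟩
        intro x hx y hy hle
        obtain ⟨k, hk⟩ := hle
        have hxB : x ∈ B := hJ.1 hx
        have hyB : y ∈ B := by
          rw [hB, Finset.mem_sdiff]
          refine ⟨hy, ?_⟩
          intro hyK
          have : f^[k] y ∈ K := hKiter k hyK
          rw [hk] at this
          rw [hB, Finset.mem_sdiff] at hxB
          exact hxB.2 this
        have : g^[k] y = x := by
          rw [path k y hyB (by rw [hk]; exact hxB)]
          exact hk
        exact hJ.2 x hx y hyB ⟨k, this⟩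
  -- V is not an ideal of B
  have hVnotB : V ∉ idealFamily B (fle g) := by
    intro h
    obtain ⟨c, hcK⟩ := hKne
    have : c ∈ B := (mem_idealFamily.1 h).1 (hKV hcK)
    rw [hB, Finset.mem_sdiff] at this
    exact this.2 hcK
  -- no nontrivial g-periodic points in B
  have hanti : ∀ x ∈ B, ∀ k : ℕ, g^[k + 1] x = x → g x = x := by
    intro x hx k hkx
    by_cases hstay : ∀ i, i < k + 1 → f (g^[i] x) ∈ B
    · exfalso
      have hiter : ∀ i, i ≤ k + 1 → g^[i] x = f^[i] x := by
        intro i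
        induction i with
        | zero => intro _; rfl
        | succ m ih =>
          intro hm
          have hm' : m ≤ k + 1 := by omega
          have hmB : f (g^[m] x) ∈ B := hstay m (by omega)
          rw [Function.iterate_succ_apply', Function.iterate_succ_apply',
            ← ih hm']
          exact if_pos hmB
      have hxK : x ∈ K := by
        rw [hK, Finset.mem_filter]
        exact ⟨hBV hx, ⟨k, by rw [← hiter (k + 1) le_rfl]; exact hkx⟩⟩
      rw [hB, Finset.mem_sdiff] at hx
      exact hx.2 hxK
    · push_neg at hstay
      obtain ⟨i, hi, hfi⟩ := hstay
      have hz : g (g^[i] x) = g^[i] x := if_neg hfi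
      have hfix : ∀ m : ℕ, g^[m] (g^[i] x) = g^[i] x := fun m =>
        Function.iterate_fixed hz m
      have hxz : x = g^[i] x := by
        have h1 : g^[k + 1 - i] (g^[i] x) = g^[i] x := hfix (k + 1 - i)
        rw [← Function.iterate_add_apply] at h1
        have : k + 1 - i + i = k + 1 := by omega
        rw [this, hkx] at h1
        exact h1
      rw [hxz]
      exact hz
  -- arithmetic
  have hBcard : B.card < V.card := by
    have h1 : B.card = V.card - K.card := by rw [hB, Finset.card_sdiff_of_subset hKV]
    have h2 : 1 ≤ K.card := Finset.card_pos.2 hKne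
    have h3 : K.card ≤ V.card := Finset.card_le_card hKV
    have h4 : 1 ≤ V.card := Finset.card_pos.2 hne
    omega
  have hNB : NDS B (idealFamily B (fle g)) ≤ 0 := hIH B g hBcard hgB
  have hFBc : B.card + 1 ≤ (idealFamily B (fle g)).card :=
    card_idealFamily_ge g B hanti
  have hVc : (V.card : ℤ) = (B.card : ℤ) + K.card := by
    have h1 : B.card = V.card - K.card := by rw [hB, Finset.card_sdiff_of_subset hKV]
    have h3 : K.card ≤ V.card := Finset.card_le_card hKV
    omega
  set FB := idealFamily B (fle g) with hFB
  have hcard : (idealFamily V (fle f)).card = FB.card + 1 := by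
    rw [famEq, Finset.card_insert_of_notMem hVnotB]
  have hsum : ∑ A ∈ idealFamily V (fle f), (A.card : ℤ) =
      (V.card : ℤ) + ∑ A ∈ FB, (A.card : ℤ) := by
    rw [famEq, Finset.sum_insert hVnotB]
  unfold NDS at hNB ⊢
  rw [hcard, hsum]
  have hb : (0 : ℤ) ≤ (B.card : ℤ) := Int.natCast_nonneg _
  have hc1 : (1 : ℤ) ≤ (K.card : ℤ) := by exact_mod_cast Finset.card_pos.2 hKne
  have hm : (B.card : ℤ) + 1 ≤ (FB.card : ℤ) := by exact_mod_cast hFBc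
  push_cast
  nlinarith [hNB, hm, hc1, hb, hVc,
    mul_le_mul_of_nonneg_right hm (le_trans zero_le_one hc1),
    mul_nonneg hb (sub_nonneg.2 hc1)]

lemma key : ∀ (n : ℕ) (V : Finset α) (f : α → α), V.card = n →
    (∀ x ∈ V, f x ∈ V) → NDS V (idealFamily V (fle f)) ≤ 0 := by
  intro n
  induction n using Nat.strong_induction_on with
  | _ n IH =>
    intro V f hcard hV
    classical
    rcases Finset.eq_empty_or_nonempty V with rfl | hne
    · rw [idealFamily_empty]
      simp [NDS]
    by_cases hsplit : ∃ x₀ ∈ V, V.filter (fun y => ∃ k l : ℕ, f^[k] y = f^[l] x₀) ≠ V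
    · obtain ⟨x₀, hx₀, hneq⟩ := hsplit
      set V₁ := V.filter (fun y => ∃ k l : ℕ, f^[k] y = f^[l] x₀) with hV₁
      set V₂ := V \ V₁ with hV₂
      have hsub1 : V₁ ⊆ V := Finset.filter_subset _ _
      have hx₀V₁ : x₀ ∈ V₁ := Finset.mem_filter.2 ⟨hx₀, ⟨0, 0, rfl⟩⟩
      have h1 : ∀ x ∈ V₁, f x ∈ V₁ := by
        intro x hx
        rw [Finset.mem_filter] at hx ⊢
        obtain ⟨hxV, k, l, hkl⟩ := hx
        refine ⟨hV x hxV, k, l + 1, ?_⟩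
        calc f^[k] (f x) = f (f^[k] x) := by
              rw [← Function.iterate_succ_apply, Function.iterate_succ_apply']
          _ = f^[l + 1] x₀ := by rw [hkl, Function.iterate_succ_apply']
      have h2 : ∀ x ∈ V₂, f x ∈ V₂ := by
        intro x hx
        rw [hV₂, Finset.mem_sdiff] at hx ⊢
        refine ⟨hV x hx.1, ?_⟩
        intro hfx
        refine hx.2 ?_
        rw [Finset.mem_filter] at hfx ⊢
        obtain ⟨_, k, l, hkl⟩ := hfx
        refine ⟨hx.1, k + 1, l, ?_⟩
        rw [Function.iterate_add_apply]
        simpa using hkl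
      have hdisj : Disjoint V₁ V₂ := Finset.disjoint_sdiff
      have hunion : V₁ ∪ V₂ = V := Finset.union_sdiff_of_subset hsub1
      have hlt1 : V₁.card < n := by
        rw [← hcard]
        exact Finset.card_lt_card (Finset.ssubset_iff_subset_ne.2 ⟨hsub1, hneq⟩)
      have hlt2 : V₂.card < n := by
        rw [← hcard]
        have h1' : V₂.card = V.card - V₁.card := by rw [hV₂, Finset.card_sdiff_of_subset hsub1]
        have h2' : 1 ≤ V₁.card := Finset.card_pos.2 ⟨x₀, hx₀V₁⟩
        have h3' : V₁.card ≤ V.card := Finset.card_le_card hsub1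
        have h4' : 1 ≤ V.card := Finset.card_pos.2 hne
        omega
      rw [nds_product f V V₁ V₂ h1 h2 hdisj hunion]
      have n1 := IH V₁.card hlt1 V₁ f rfl h1
      have n2 := IH V₂.card hlt2 V₂ f rfl h2
      have c1 : (0 : ℤ) ≤ ((idealFamily V₂ (fle f)).card : ℤ) := Int.natCast_nonneg _
      have c2 : (0 : ℤ) ≤ ((idealFamily V₁ (fle f)).card : ℤ) := Int.natCast_nonneg _
      have := mul_nonpos_of_nonneg_of_nonpos c1 n1
      have := mul_nonpos_of_nonneg_of_nonpos c2 n2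
      linarith
    · push_neg at hsplit
      have hconn : ∀ x ∈ V, ∀ y ∈ V, ∃ k l : ℕ, f^[k] y = f^[l] x := by
        intro x hx y hy
        have := hsplit x hx
        have hy' : y ∈ V.filter (fun y => ∃ k l : ℕ, f^[k] y = f^[l] x) := by
          rw [this]; exact hy
        exact (Finset.mem_filter.1 hy').2
      exact connected_case f V hV hconn hne
        (fun B g hBV hgB => IH B.card (hcard ▸ hBV) B g rfl hgB)

end AvgRareProof

open scoped Classical in
theorem main_theorem {α : Type*} [Fintype α] [DecidableEq α] (f : α → α) :
    NDS Finset.univ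
        (idealFamily Finset.univ (fun a b : α => ∃ k : ℕ, f^[k] a = b)) ≤ 0 ∧
    (Nonempty α → ∃ u : α,
      2 * ((idealFamily Finset.univ
              (fun a b : α => ∃ k : ℕ, f^[k] a = b)).filter (fun A => u ∈ A)).card ≤
        (idealFamily Finset.univ (fun a b : α => ∃ k : ℕ, f^[k] a = b)).card) := by
  have h1 : NDS Finset.univ
      (idealFamily Finset.univ (fun a b : α => ∃ k : ℕ, f^[k] a = b)) ≤ 0 :=
    AvgRareProof.key Finset.univ.card Finset.univ f rfl (by simp)
  refine ⟨h1, ?_⟩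
  intro hα
  by_contra hcon
  push_neg at hcon
  set F := idealFamily Finset.univ (fun a b : α => ∃ k : ℕ, f^[k] a = b) with hF
  have hdc : ∑ A ∈ F, (A.card : ℤ) =
      ∑ u ∈ (Finset.univ : Finset α), ((F.filter (fun A => u ∈ A)).card : ℤ) := by
    have step : ∀ A ∈ F, (A.card : ℤ) =
        ∑ u ∈ (Finset.univ : Finset α), (if u ∈ A then (1 : ℤ) else 0) := by
      intro A _
      rw [Finset.sum_ite_mem, Finset.univ_inter, Finset.sum_const]
      simp
    rw [Finset.sum_congr rfl step, Finset.sum_comm]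
    refine Finset.sum_congr rfl ?_
    intro u _
    rw [Finset.card_filter]
    push_cast
    rfl
  have hbound : ∀ u : α, (F.card : ℤ) + 1 ≤ 2 * ((F.filter (fun A => u ∈ A)).card : ℤ) := by
    intro u
    have := hcon u
    omega
  have hsum2 : ∑ _u ∈ (Finset.univ : Finset α), ((F.card : ℤ) + 1) ≤
      ∑ u ∈ (Finset.univ : Finset α), 2 * ((F.filter (fun A => u ∈ A)).card : ℤ) :=
    Finset.sum_le_sum (fun u _ => hbound u)
  rw [Finset.sum_const, Finset.card_univ, nsmul_eq_mul, ← Finset.mul_sum, ← hdc] at hsum2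
  have hn : 1 ≤ (Fintype.card α : ℤ) := by exact_mod_cast Fintype.card_pos
  unfold NDS at h1
  rw [Finset.card_univ] at h1
  nlinarith [hsum2, h1, hn, Int.natCast_nonneg F.card]
end
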